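/- For every x̄, p̄ ∈ ℝ^n, if (λ₁, w₁) and (λ₂, w₂) are both classical solutions of the supercritical cell problem at (x̄, p̄), then λ₁ = λ₂. -/

import Mathlib

open Matrix MeasureTheory Set

noncomputable section

/-- Euclidean norm of a vector in `ℝ^k`. -/
def en {k : ℕ} (v : Fin k → ℝ) : ℝ := Real.sqrt (v ⬝ᵥ v)

/-- Squared Euclidean norm. -/
def sq2 {k : ℕ} (v : Fin k → ℝ) : ℝ := v ⬝ᵥ v

/-- Partial derivative in the `i`-th coordinate direction. -/
def pd {m : ℕ} (w : (Fin m → ℝ) → ℝ) (i : Fin m) (y : Fin m → ℝ) : ℝ :=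
  fderiv ℝ w y (Pi.single i 1)

/-- Gradient. -/
def vgrad {m : ℕ} (w : (Fin m → ℝ) → ℝ) (y : Fin m → ℝ) : Fin m → ℝ := fun i => pd w i y

/-- Hessian matrix. -/
def vhess {m : ℕ} (w : (Fin m → ℝ) → ℝ) (y : Fin m → ℝ) : Matrix (Fin m) (Fin m) ℝ :=
  Matrix.of fun i j => pd (pd w j) i y

/-- `ℤ^m`-periodicity. -/
def ZPer {m : ℕ} (w : (Fin m → ℝ) → ℝ) : Prop :=
  ∀ (y : Fin m → ℝ) (k : Fin m → ℤ), w (y + fun i => (k i : ℝ)) = w y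

/-- Standing hypotheses on the data. -/
structure StandingHyp {n m r : ℕ}
    (σ : (Fin n → ℝ) → (Fin m → ℝ) → Matrix (Fin n) (Fin r) ℝ)
    (b : (Fin m → ℝ) → Fin m → ℝ)
    (τ : (Fin m → ℝ) → Matrix (Fin m) (Fin r) ℝ) : Prop where
  σ_bdd : ∃ C : ℝ, ∀ x y i j, |σ x y i j| ≤ C
  σ_lip : ∃ L : ℝ, ∀ x x' y y' i j, |σ x y i j - σ x' y' i j| ≤ L * (en (x - x') + en (y - y'))
  σ_per : ∀ x y (k : Fin m → ℤ), σ x (y + fun l => (k l : ℝ)) = σ x y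
  b_lip : ∃ L : ℝ, ∀ y y' i, |b y i - b y' i| ≤ L * en (y - y')
  b_per : ∀ y (k : Fin m → ℤ), b (y + fun l => (k l : ℝ)) = b y
  τ_lip : ∃ L : ℝ, ∀ y y' i j, |τ y i j - τ y' i j| ≤ L * en (y - y')
  τ_per : ∀ y (k : Fin m → ℤ), τ (y + fun l => (k l : ℝ)) = τ y
  τ_nondeg : ∃ θ : ℝ, 0 < θ ∧ ∀ y ξ, θ * sq2 ξ ≤ sq2 ((τ y)ᵀ *ᵥ ξ)

/-- Classical solution of the critical cell problem at `(x, p)`. -/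
def IsCriticalSol {n m r : ℕ}
    (σ : (Fin n → ℝ) → (Fin m → ℝ) → Matrix (Fin n) (Fin r) ℝ)
    (b : (Fin m → ℝ) → Fin m → ℝ)
    (τ : (Fin m → ℝ) → Matrix (Fin m) (Fin r) ℝ)
    (x p : Fin n → ℝ) (lam : ℝ) (w : (Fin m → ℝ) → ℝ) : Prop :=
  ContDiff ℝ 2 w ∧ ZPer w ∧
    ∀ y, lam = sq2 ((σ x y)ᵀ *ᵥ p)
        + 2 * ((τ y *ᵥ ((σ x y)ᵀ *ᵥ p)) ⬝ᵥ vgrad w y)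
        + b y ⬝ᵥ vgrad w y
        + sq2 ((τ y)ᵀ *ᵥ vgrad w y)
        + Matrix.trace (τ y * (τ y)ᵀ * vhess w y)

/-- Classical solution of the supercritical cell problem at `(x, p)`. -/
def IsSupercriticalSol {n m r : ℕ}
    (σ : (Fin n → ℝ) → (Fin m → ℝ) → Matrix (Fin n) (Fin r) ℝ)
    (b : (Fin m → ℝ) → Fin m → ℝ)
    (τ : (Fin m → ℝ) → Matrix (Fin m) (Fin r) ℝ)
    (x p : Fin n → ℝ) (lam : ℝ) (w : (Fin m → ℝ) → ℝ) : Prop :=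
  ContDiff ℝ 2 w ∧ ZPer w ∧
    ∀ y, lam = sq2 ((σ x y)ᵀ *ᵥ p) + b y ⬝ᵥ vgrad w y
        + Matrix.trace (τ y * (τ y)ᵀ * vhess w y)

/-- Classical solution of the subcritical cell problem at `(x, p)`. -/
def IsSubcriticalSol {n m r : ℕ}
    (σ : (Fin n → ℝ) → (Fin m → ℝ) → Matrix (Fin n) (Fin r) ℝ)
    (τ : (Fin m → ℝ) → Matrix (Fin m) (Fin r) ℝ)
    (x p : Fin n → ℝ) (lam : ℝ) (w : (Fin m → ℝ) → ℝ) : Prop :=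
  ContDiff ℝ 1 w ∧ ZPer w ∧
    ∀ y, lam = sq2 ((τ y)ᵀ *ᵥ vgrad w y + (σ x y)ᵀ *ᵥ p)

/-!
The difference `u = w₁ - w₂` of two solutions is `ℤ^m`-periodic, hence attains a global maximum
at some `y₀`. There `Du(y₀) = 0` and `D²u(y₀) ≤ 0`, so
`tr (τ τᵀ D²u(y₀)) = Σⱼ τⱼᵀ D²u(y₀) τⱼ ≤ 0` (with `τⱼ` the columns of `τ(y₀)`). Subtracting the two
equations at `y₀` gives `λ₁ - λ₂ = b · Du(y₀) + tr (τ τᵀ D²u(y₀)) ≤ 0`; by symmetry `λ₁ = λ₂`.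
-/

open Topology

theorem ContDiff.differentiable_fderiv {𝕜 E F : Type*} [NontriviallyNormedField 𝕜]
    [NormedAddCommGroup E] [NormedSpace 𝕜 E] [NormedAddCommGroup F] [NormedSpace 𝕜 F]
    {f : E → F} (hf : ContDiff 𝕜 2 f) : Differentiable 𝕜 (fderiv 𝕜 f) :=
  (hf.fderiv_right (m := 1) le_rfl).differentiable one_ne_zero

theorem IsLocalMax.deriv_deriv_nonpos {f : ℝ → ℝ} {a : ℝ} (h : IsLocalMax f a)
    (hc : ContinuousAt f a) : deriv (deriv f) a ≤ 0 := by
  by_contra! hpos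
  have hmin : IsLocalMin f a := isLocalMin_of_deriv_deriv_pos hpos h.deriv_eq_zero hc
  have hconst : f =ᶠ[𝓝 a] fun _ => f a :=
    (h.and hmin).mono fun _ hx => le_antisymm hx.1 hx.2
  have : deriv (deriv f) a = 0 := by
    rw [hconst.deriv.deriv_eq]
    simp
  exact hpos.ne' this

theorem IsLocalMax.fderiv_fderiv_apply_self_nonpos {E : Type*} [NormedAddCommGroup E]
    [NormedSpace ℝ E] {u : E → ℝ} {a : E} (h : IsLocalMax u a) (hu : ContDiff ℝ 2 u) (v : E) :
    fderiv ℝ (fderiv ℝ u) a v v ≤ 0 := by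
  set ℓ : ℝ → E := fun t => a + t • v
  have hℓ : ∀ t, HasDerivAt ℓ v t := fun t => by
    simpa [ℓ] using ((hasDerivAt_id t).smul_const v).const_add a
  have hℓ0 : ℓ 0 = a := by simp [ℓ]
  have hu1 : Differentiable ℝ u := hu.differentiable two_ne_zero
  have hderiv : deriv (u ∘ ℓ) = fun t => fderiv ℝ u (ℓ t) v := funext fun t =>
    ((hu1 _).hasFDerivAt.comp_hasDerivAt t (hℓ t)).deriv
  have hderiv2 : HasDerivAt (fun t => fderiv ℝ u (ℓ t) v) (fderiv ℝ (fderiv ℝ u) a v v) 0 := by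
    simpa [hℓ0] using ((hu.differentiable_fderiv _).hasFDerivAt.comp_hasDerivAt 0 (hℓ 0)).clm_apply
      (hasDerivAt_const 0 v)
  have hmax : IsLocalMax (u ∘ ℓ) 0 :=
    (hℓ0 ▸ h).comp_continuous (hℓ 0).continuousAt
  have := hmax.deriv_deriv_nonpos (hu1.continuous.continuousAt.comp (hℓ 0).continuousAt)
  rwa [hderiv, hderiv2.deriv] at this

theorem pd_pd_eq_fderiv_fderiv {m : ℕ} {u : (Fin m → ℝ) → ℝ} {y : Fin m → ℝ}
    (hu : DifferentiableAt ℝ (fderiv ℝ u) y) (i j : Fin m) :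
    pd (pd u j) i y = fderiv ℝ (fderiv ℝ u) y (Pi.single i 1) (Pi.single j 1) := by
  have := hu.hasFDerivAt.clm_apply (hasFDerivAt_const (Pi.single j (1 : ℝ)) y)
  simp [pd, show pd u j = fun y => fderiv ℝ u y (Pi.single j 1) from rfl, this.fderiv]

theorem dotProduct_vhess_mulVec {m : ℕ} {u : (Fin m → ℝ) → ℝ} {y : Fin m → ℝ}
    (hu : DifferentiableAt ℝ (fderiv ℝ u) y) (v : Fin m → ℝ) :
    v ⬝ᵥ (vhess u y *ᵥ v) = fderiv ℝ (fderiv ℝ u) y v v := by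
  conv_rhs => rw [pi_eq_sum_univ' v]
  simp only [dotProduct, mulVec, vhess, of_apply, pd_pd_eq_fderiv_fderiv hu, map_sum, map_smul,
    _root_.sum_apply, _root_.smul_apply, smul_eq_mul, Finset.mul_sum]
  rw [Finset.sum_comm]
  simp only [mul_left_comm, mul_comm]

theorem Matrix.trace_mul_transpose_mul_nonpos {ι κ R : Type*} [Fintype ι] [Fintype κ]
    [CommRing R] [PartialOrder R] [IsOrderedRing R] (A : Matrix ι κ R) (H : Matrix ι ι R)
    (hH : ∀ v, v ⬝ᵥ (H *ᵥ v) ≤ 0) : trace (A * Aᵀ * H) ≤ 0 := by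
  rw [← trace_mul_cycle]
  refine Finset.sum_nonpos fun j _ => le_of_eq_of_le ?_ (hH fun i => A i j)
  simp only [diag, mul_apply, transpose_apply, dotProduct, mulVec, Finset.sum_mul, Finset.mul_sum]
  rw [Finset.sum_comm]
  simp only [mul_assoc]

theorem ZPer.exists_forall_le {m : ℕ} {u : (Fin m → ℝ) → ℝ} (hper : ZPer u)
    (hu : Continuous u) : ∃ y₀, ∀ y, u y ≤ u y₀ := by
  obtain ⟨y₀, -, hy₀⟩ := (isCompact_Icc (a := (0 : Fin m → ℝ)) (b := 1)).exists_isMaxOn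
    (nonempty_Icc.2 zero_le_one) hu.continuousOn
  refine ⟨y₀, fun y => ?_⟩
  have hfract : (fun i => Int.fract (y i)) ∈ Icc (0 : Fin m → ℝ) 1 :=
    ⟨fun i => Int.fract_nonneg _, fun i => (Int.fract_lt_one _).le⟩
  have hy : ((fun i => Int.fract (y i)) + fun i => ((⌊y i⌋ : ℤ) : ℝ)) = y := by
    funext i; simp [Int.fract_add_floor]
  rw [← hy, hper]
  exact hy₀ hfract

theorem ZPer.sub {m : ℕ} {f g : (Fin m → ℝ) → ℝ} (hf : ZPer f) (hg : ZPer g) : ZPer (f - g) :=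
  fun y k => by simp [hf y k, hg y k]

theorem pd_sub {m : ℕ} {f g : (Fin m → ℝ) → ℝ} {y : Fin m → ℝ} (hf : DifferentiableAt ℝ f y)
    (hg : DifferentiableAt ℝ g y) (i : Fin m) : pd (f - g) i y = pd f i y - pd g i y := by
  simp [pd, fderiv_sub hf hg]

theorem vgrad_sub {m : ℕ} {f g : (Fin m → ℝ) → ℝ} {y : Fin m → ℝ} (hf : DifferentiableAt ℝ f y)
    (hg : DifferentiableAt ℝ g y) : vgrad (f - g) y = vgrad f y - vgrad g y :=
  funext (pd_sub hf hg)

theorem ContDiff.differentiable_pd {m : ℕ} {f : (Fin m → ℝ) → ℝ} (hf : ContDiff ℝ 2 f)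
    (j : Fin m) : Differentiable ℝ (pd f j) :=
  fun y => (hf.differentiable_fderiv y).clm_apply (differentiableAt_const _)

theorem vhess_sub {m : ℕ} {f g : (Fin m → ℝ) → ℝ} (hf : ContDiff ℝ 2 f) (hg : ContDiff ℝ 2 g)
    (y : Fin m → ℝ) : vhess (f - g) y = vhess f y - vhess g y := by
  have hpd : ∀ j, pd (f - g) j = pd f j - pd g j := fun j => funext fun y =>
    pd_sub (hf.differentiable two_ne_zero y) (hg.differentiable two_ne_zero y) j
  ext i j
  simp only [vhess, of_apply, Matrix.sub_apply, hpd]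
  exact pd_sub (hf.differentiable_pd j y) (hg.differentiable_pd j y) i

theorem ZPer.exists_drift_add_diffusion_nonpos {m r : ℕ} {u : (Fin m → ℝ) → ℝ} (hper : ZPer u)
    (hu : ContDiff ℝ 2 u) (b : (Fin m → ℝ) → Fin m → ℝ)
    (τ : (Fin m → ℝ) → Matrix (Fin m) (Fin r) ℝ) :
    ∃ y, b y ⬝ᵥ vgrad u y + trace (τ y * (τ y)ᵀ * vhess u y) ≤ 0 := by
  obtain ⟨y₀, hy₀⟩ := hper.exists_forall_le hu.continuous
  have hmax : IsLocalMax u y₀ := Filter.Eventually.of_forall hy₀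
  have hgrad : vgrad u y₀ = 0 := funext fun i => by simp [vgrad, pd, hmax.fderiv_eq_zero]
  have hhess : trace (τ y₀ * (τ y₀)ᵀ * vhess u y₀) ≤ 0 :=
    trace_mul_transpose_mul_nonpos _ _ fun v =>
      (dotProduct_vhess_mulVec (hu.differentiable_fderiv y₀) v).trans_le
        (hmax.fderiv_fderiv_apply_self_nonpos hu v)
  exact ⟨y₀, by simpa [hgrad] using hhess⟩

theorem IsSupercriticalSol.le {n m r : ℕ}
    {σ : (Fin n → ℝ) → (Fin m → ℝ) → Matrix (Fin n) (Fin r) ℝ} {b : (Fin m → ℝ) → Fin m → ℝ}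
    {τ : (Fin m → ℝ) → Matrix (Fin m) (Fin r) ℝ} {x p : Fin n → ℝ} {lam₁ lam₂ : ℝ}
    {w₁ w₂ : (Fin m → ℝ) → ℝ} (h₁ : IsSupercriticalSol σ b τ x p lam₁ w₁)
    (h₂ : IsSupercriticalSol σ b τ x p lam₂ w₂) : lam₁ ≤ lam₂ := by
  obtain ⟨hw₁, hper₁, heq₁⟩ := h₁
  obtain ⟨hw₂, hper₂, heq₂⟩ := h₂
  obtain ⟨y, hy⟩ := (hper₁.sub hper₂).exists_drift_add_diffusion_nonpos (hw₁.sub hw₂) b τ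
  have hdiff : lam₁ - lam₂ = b y ⬝ᵥ vgrad (w₁ - w₂) y
      + trace (τ y * (τ y)ᵀ * vhess (w₁ - w₂) y) := by
    rw [vgrad_sub (hw₁.differentiable two_ne_zero y) (hw₂.differentiable two_ne_zero y),
      vhess_sub hw₁ hw₂, Matrix.mul_sub, trace_sub, dotProduct_sub, heq₁ y, heq₂ y]
    ring
  linarith

theorem stmt8_general {n m r : ℕ}
    (σ : (Fin n → ℝ) → (Fin m → ℝ) → Matrix (Fin n) (Fin r) ℝ)
    (b : (Fin m → ℝ) → Fin m → ℝ)
    (τ : (Fin m → ℝ) → Matrix (Fin m) (Fin r) ℝ)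
    (xbar pbar : Fin n → ℝ)
    (lam₁ lam₂ : ℝ) (w₁ w₂ : (Fin m → ℝ) → ℝ)
    (h₁ : IsSupercriticalSol σ b τ xbar pbar lam₁ w₁)
    (h₂ : IsSupercriticalSol σ b τ xbar pbar lam₂ w₂) :
    lam₁ = lam₂ :=
  le_antisymm (h₁.le h₂) (h₂.le h₁)

/-- uniqueness of the additive eigenvalue in the supercritical cell
problem. -/
theorem stmt8 {n m r : ℕ}
    (σ : (Fin n → ℝ) → (Fin m → ℝ) → Matrix (Fin n) (Fin r) ℝ)
    (b : (Fin m → ℝ) → Fin m → ℝ)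
    (τ : (Fin m → ℝ) → Matrix (Fin m) (Fin r) ℝ)
    (hyp : StandingHyp σ b τ)
    (xbar pbar : Fin n → ℝ)
    (lam₁ lam₂ : ℝ) (w₁ w₂ : (Fin m → ℝ) → ℝ)
    (h₁ : IsSupercriticalSol σ b τ xbar pbar lam₁ w₁)
    (h₂ : IsSupercriticalSol σ b τ xbar pbar lam₂ w₂) :
    lam₁ = lam₂ :=
  stmt8_general σ b τ xbar pbar lam₁ lam₂ w₁ w₂ h₁ h₂

end
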